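/- Let $E \subset \mathbb{R}^3$ be an ellipsoid $\{\xi : \sum_{i=1}^3 (l_i(\xi) - z_i)^2 \le 1\}$ for linearly independent linear forms $l_1, l_2, l_3$ on $\mathbb{R}^3$ and $(z_1,z_2,z_3) \in \mathbb{R}^3$. Then $P = \operatorname{conv}(E \cap \mathbb{Z}^3)$ is a normal lattice polytope. -/

import Mathlib

open Set Pointwise

/-- A point of `ℝ^ι` is a lattice point if all its coordinates are integers. -/
def IsLatticePt {ι : Type} (x : ι → ℝ) : Prop := ∀ i, ∃ n : ℤ, x i = n

/-- A lattice polytope: the convex hull of a nonempty finite set of lattice points. -/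
def IsLatticePolytope {ι : Type} (P : Set (ι → ℝ)) : Prop :=
  ∃ V : Set (ι → ℝ), V.Finite ∧ V.Nonempty ∧ (∀ x ∈ V, IsLatticePt x) ∧ P = convexHull ℝ V

/-- A polytope is normal if for every `c ≥ 1` each lattice point of the dilation `c • P`
is a sum of `c` lattice points of `P`. -/
def IsNormal {ι : Type} (P : Set (ι → ℝ)) : Prop :=
  ∀ c : ℕ, 0 < c → ∀ x : ι → ℝ, x ∈ (c : ℝ) • P → IsLatticePt x →
    ∃ f : Fin c → (ι → ℝ), (∀ i, f i ∈ P ∧ IsLatticePt (f i)) ∧ x = ∑ i, f i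

/-!
Let `S` be the set of lattice points of the ellipsoid `E = {q ≤ 1}` and `P = conv S`. As `E` is
convex, every lattice point of `P` lies in `S`.

Degree 2: for `x = 2w` with `w ∈ P`, the function `u ↦ q (x - u) - q u` is affine and vanishes at
`w`, so it is `≤ 0` at some `u ∈ S`; then `x = u + (x - u)` with `q (x - u) ≤ q u ≤ 1`.

Degree `c ≥ 4`: by Carathéodory `x / c` is a convex combination of at most four points of `S`, one
of them with weight `≥ 1/4 ≥ 1/c`; peeling it off leaves a lattice point of `(c - 1) P`.

Degree 3: write `x / 3 = ∑ λⱼ vⱼ` over an affinely independent family. If some `λⱼ ≥ 1/3`, peel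
off `vⱼ` and use degree 2. Otherwise `y = ∑ vⱼ - x = ∑ (1 - 3 λⱼ) vⱼ` is a lattice point of `P`,
hence of `S`, and `x / 3` lies in a simplex obtained by replacing one `vⱼ` by `y`. This multiplies
the integral determinant of the homogenized vertices by `1 - 3 λⱼ < 1`, so the process stops.
-/

theorem IsLatticePt.add {ι : Type} {x y : ι → ℝ} (hx : IsLatticePt x) (hy : IsLatticePt y) :
    IsLatticePt (x + y) := fun i => by
  obtain ⟨m, hm⟩ := hx i
  obtain ⟨n, hn⟩ := hy i
  exact ⟨m + n, by simp [hm, hn]⟩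

theorem IsLatticePt.sub {ι : Type} {x y : ι → ℝ} (hx : IsLatticePt x) (hy : IsLatticePt y) :
    IsLatticePt (x - y) := fun i => by
  obtain ⟨m, hm⟩ := hx i
  obtain ⟨n, hn⟩ := hy i
  exact ⟨m - n, by simp [hm, hn]⟩

theorem isLatticePt_sum {ι κ : Type} {t : Finset κ} {f : κ → ι → ℝ}
    (hf : ∀ k ∈ t, IsLatticePt (f k)) : IsLatticePt (∑ k ∈ t, f k) :=
  Finset.sum_induction f IsLatticePt (fun _ _ => IsLatticePt.add) (fun _ => ⟨0, by simp⟩) hf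

section ConvexGeometry

variable {E : Type*} [AddCommGroup E] [Module ℝ E] {κ : Type*} [Fintype κ]

theorem exists_one_le_card_mul {w : κ → ℝ} (hw1 : ∑ k, w k = 1) :
    ∃ j, 1 ≤ Fintype.card κ * w j := by
  by_contra! hlt
  have hne : (Finset.univ : Finset κ).Nonempty :=
    Finset.nonempty_of_sum_ne_zero (by rw [hw1]; exact one_ne_zero)
  have := Finset.sum_lt_sum_of_nonempty hne fun k _ => hlt k
  rw [← Finset.mul_sum, hw1, Finset.sum_const, Finset.card_univ] at this
  simp at this

theorem add_one_smul_sub_mem_smul_convexHull [DecidableEq κ] {s : Set E} {w : κ → ℝ}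
    {v : κ → E} (hw0 : ∀ k, 0 ≤ w k) (hw1 : ∑ k, w k = 1) (hv : ∀ k, v k ∈ s) {c : ℝ}
    (hc : 0 < c) {j : κ} (hj : 1 ≤ (c + 1) * w j) :
    (c + 1) • ∑ k, w k • v k - v j ∈ c • convexHull ℝ s := by
  set μ : κ → ℝ := fun k => ((c + 1) * w k - if k = j then 1 else 0) / c with hμ
  have hμ0 : ∀ k ∈ Finset.univ, 0 ≤ μ k := by
    intro k _
    refine div_nonneg ?_ hc.le
    split_ifs with hk
    · subst hk; linarith
    · simpa using mul_nonneg (by linarith : 0 ≤ c + 1) (hw0 k)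
  have hμ1 : ∑ k, μ k = 1 := by
    simp only [hμ, ← Finset.sum_div, Finset.sum_sub_distrib, ← Finset.mul_sum, hw1,
      Finset.sum_ite_eq', Finset.mem_univ, if_true]
    field_simp
    ring
  refine ⟨∑ k, μ k • v k, (convex_convexHull ℝ s).sum_mem hμ0 hμ1
    fun k _ => subset_convexHull ℝ s (hv k), ?_⟩
  have hterm : ∀ k, c • μ k • v k = (c + 1) • w k • v k - if k = j then v k else 0 := by
    intro k
    rw [smul_smul, hμ, mul_div_cancel₀ _ hc.ne', sub_smul, mul_smul, ite_smul, one_smul, zero_smul]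
  show c • _ = _
  rw [Finset.smul_sum, Finset.smul_sum]
  simp only [hterm, Finset.sum_sub_distrib, Finset.sum_ite_eq', Finset.mem_univ, if_true]

theorem exists_weights_update_sum_smul [DecidableEq κ] [Nonempty κ] {w β : κ → ℝ}
    (hw0 : ∀ k, 0 ≤ w k) (hw1 : ∑ k, w k = 1) (hβ0 : ∀ k, 0 < β k) (hβ1 : ∑ k, β k = 1)
    (v : κ → E) :
    ∃ j, ∃ w' : κ → ℝ, (∀ k, 0 ≤ w' k) ∧ ∑ k, w' k = 1 ∧
      ∑ k, w' k • Function.update v j (∑ k, β k • v k) k = ∑ k, w k • v k := by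
  -- `j` minimises `w / β`, so `t = w j / β j` is the largest step with `w - t β ≥ 0`
  obtain ⟨j, -, hj⟩ :=
    Finset.exists_min_image Finset.univ (fun k => w k / β k) Finset.univ_nonempty
  set t := w j / β j
  have ht : ∀ k, t * β k ≤ w k := fun k => (le_div_iff₀ (hβ0 k)).1 (hj k (Finset.mem_univ k))
  have htj : w j - t * β j = 0 := by simp [t, div_mul_cancel₀ _ (hβ0 j).ne']
  set w' := Function.update (fun k => w k - t * β k) j t
  have hw' : ∀ k, w' k = (w k - t * β k) + if k = j then t else 0 := by
    intro k
    rcases eq_or_ne k j with rfl | hk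
    · simp [w', htj]
    · simp [w', hk]
  refine ⟨j, w', fun k => ?_, ?_, ?_⟩
  · rw [hw']
    have := ht k
    split_ifs
    · linarith [div_nonneg (hw0 j) (hβ0 j).le]
    · linarith
  · simp only [hw', Finset.sum_add_distrib, Finset.sum_sub_distrib, ← Finset.mul_sum, hw1, hβ1,
      Finset.sum_ite_eq', Finset.mem_univ, if_true]
    ring
  · have : ∀ k, w' k • Function.update v j (∑ k, β k • v k) k
        = (w k - t * β k) • v k + if k = j then t • ∑ k, β k • v k else 0 := by
      intro k
      rcases eq_or_ne k j with rfl | hk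
      · simp [w', htj]
      · simp [w', hk]
    simp only [this, Finset.sum_add_distrib, sub_smul, Finset.sum_sub_distrib, mul_smul,
      ← Finset.smul_sum, Finset.sum_ite_eq', Finset.mem_univ, if_true, sub_add_cancel]

end ConvexGeometry

theorem pos_of_sum_eq_one_of_mul_lt_one {n : ℕ} {w : Fin (n + 2) → ℝ} (hw1 : ∑ k, w k = 1)
    (hlt : ∀ k, ((n : ℝ) + 1) * w k < 1) (j : Fin (n + 2)) : 0 < w j := by
  have hne : (Finset.univ.erase j).Nonempty :=
    Finset.card_pos.1 (by simp [Finset.card_erase_of_mem])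
  have := Finset.sum_lt_sum_of_nonempty hne fun k _ => hlt k
  rw [← Finset.mul_sum, Finset.sum_erase_eq_sub (Finset.mem_univ j), hw1, Finset.sum_const,
    Finset.card_erase_of_mem (Finset.mem_univ j), Finset.card_univ, Fintype.card_fin,
    nsmul_eq_mul, mul_one] at this
  push_cast at this
  nlinarith

theorem exists_affineIndependent_of_mem_convexHull {d : ℕ} {s : Set (Fin d → ℝ)}
    {p : Fin d → ℝ} (hp : p ∈ convexHull ℝ s) :
    ∃ (κ : Type) (_ : Fintype κ) (v : κ → Fin d → ℝ) (w : κ → ℝ), (∀ k, v k ∈ s) ∧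
      AffineIndependent ℝ v ∧ Fintype.card κ ≤ d + 1 ∧ (∀ k, 0 ≤ w k) ∧ ∑ k, w k = 1 ∧
      ∑ k, w k • v k = p := by
  obtain ⟨κ, _, v, w, hvs, hv, hw0, hw1, hp⟩ := eq_pos_convex_span_of_mem_convexHull hp
  refine ⟨κ, inferInstance, v, w, fun k => hvs (mem_range_self k), hv, ?_,
    fun k => (hw0 k).le, hw1, hp⟩
  have := (vectorSpan ℝ (range v)).finrank_le
  rw [Module.finrank_fin_fun] at this
  linarith [hv.card_le_finrank_succ]

section HomogenizedMatrix

variable {d : ℕ}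

def homogenizedMatrix (v : Fin (d + 1) → Fin d → ℝ) : Matrix (Fin (d + 1)) (Fin (d + 1)) ℝ :=
  Matrix.of fun j => (Fin.snoc (v j) 1 : Fin (d + 1) → ℝ)

theorem exists_intCast_det_homogenizedMatrix {v : Fin (d + 1) → Fin d → ℝ}
    (hv : ∀ j, IsLatticePt (v j)) : ∃ m : ℤ, (homogenizedMatrix v).det = m := by
  choose n hn using hv
  let N : Matrix (Fin (d + 1)) (Fin (d + 1)) ℤ :=
    Matrix.of fun j => (Fin.snoc (n j) 1 : Fin (d + 1) → ℤ)
  have hN : homogenizedMatrix v = N.map (Int.cast : ℤ → ℝ) := by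
    ext j i
    induction i using Fin.lastCases with
    | last => simp [homogenizedMatrix, N]
    | cast i => simp [homogenizedMatrix, N, hn]
  exact ⟨N.det, by rw [hN, Int.cast_det]⟩

theorem det_homogenizedMatrix_ne_zero {v : Fin (d + 1) → Fin d → ℝ}
    (hv : AffineIndependent ℝ v) : (homogenizedMatrix v).det ≠ 0 := by
  intro h
  obtain ⟨γ, hγ, hγv⟩ := Matrix.exists_vecMul_eq_zero_iff.2 h
  have hcol : ∀ i, ∑ j, γ j * homogenizedMatrix v j i = 0 := fun i => by
    simpa [Matrix.vecMul, dotProduct] using congrFun hγv i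
  have hsum : ∑ j, γ j = 0 := by simpa [homogenizedMatrix] using hcol (Fin.last d)
  have hcomb : ∑ j, γ j • v j = 0 := by
    ext i
    simpa [homogenizedMatrix] using hcol i.castSucc
  exact hγ (funext fun j => hv.eq_zero_of_sum_eq_zero hsum hcomb j (Finset.mem_univ j))

theorem det_homogenizedMatrix_update (v : Fin (d + 1) → Fin d → ℝ) {β : Fin (d + 1) → ℝ}
    (hβ : ∑ k, β k = 1) (j : Fin (d + 1)) :
    (homogenizedMatrix (Function.update v j (∑ k, β k • v k))).det
      = β j * (homogenizedMatrix v).det := by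
  have : homogenizedMatrix (Function.update v j (∑ k, β k • v k))
      = (homogenizedMatrix v).updateRow j (∑ k, β k • homogenizedMatrix v k) := by
    ext i c
    rcases eq_or_ne i j with rfl | hi
    · induction c using Fin.lastCases with
      | last => simp [homogenizedMatrix, hβ]
      | cast c => simp [homogenizedMatrix]
    · simp [homogenizedMatrix, hi]
  rw [this, Matrix.det_updateRow_sum, smul_eq_mul]

end HomogenizedMatrix

def IsLatticeSum {ι : Type} (P : Set (ι → ℝ)) (c : ℕ) (x : ι → ℝ) : Prop :=
  ∃ f : Fin c → ι → ℝ, (∀ i, f i ∈ P ∧ IsLatticePt (f i)) ∧ x = ∑ i, f i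

def IsNormalInDegree {ι : Type} (P : Set (ι → ℝ)) (c : ℕ) : Prop :=
  ∀ x ∈ (c : ℝ) • P, IsLatticePt x → IsLatticeSum P c x

section LatticeSum

variable {ι : Type}

theorem isLatticeSum_one {P : Set (ι → ℝ)} {x : ι → ℝ} (hx : x ∈ P) (hxl : IsLatticePt x) :
    IsLatticeSum P 1 x :=
  ⟨fun _ => x, fun _ => ⟨hx, hxl⟩, by simp⟩

theorem IsLatticeSum.cons {P : Set (ι → ℝ)} {c : ℕ} {x v : ι → ℝ} (h : IsLatticeSum P c (x - v))
    (hv : v ∈ P) (hvl : IsLatticePt v) : IsLatticeSum P (c + 1) x := by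
  obtain ⟨f, hf, hsum⟩ := h
  refine ⟨Fin.cons v f, Fin.cases ⟨hv, hvl⟩ hf, ?_⟩
  rw [Fin.sum_cons, ← hsum, add_sub_cancel]

theorem isNormalInDegree_one {P : Set (ι → ℝ)} : IsNormalInDegree P 1 := by
  intro x hx hxl
  rw [Nat.cast_one, one_smul] at hx
  exact isLatticeSum_one hx hxl

theorem IsNormalInDegree.isLatticeSum_succ {S : Set (ι → ℝ)} {c : ℕ}
    (h : IsNormalInDegree (convexHull ℝ S) c) (hc : 0 < c) (hS : ∀ x ∈ S, IsLatticePt x)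
    {κ : Type} [Fintype κ] {v : κ → ι → ℝ} {w : κ → ℝ} (hv : ∀ k, v k ∈ S)
    (hw0 : ∀ k, 0 ≤ w k) (hw1 : ∑ k, w k = 1) {j : κ} (hj : 1 ≤ ((c : ℝ) + 1) * w j)
    {x : ι → ℝ} (hx : IsLatticePt x) (hxw : x = ((c + 1 : ℕ) : ℝ) • ∑ k, w k • v k) :
    IsLatticeSum (convexHull ℝ S) (c + 1) x := by
  classical
  have hvj := hS _ (hv j)
  refine IsLatticeSum.cons (h _ ?_ (hx.sub hvj)) (subset_convexHull ℝ S (hv j)) hvj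
  rw [hxw, Nat.cast_succ]
  exact add_one_smul_sub_mem_smul_convexHull hw0 hw1 hv (Nat.cast_pos.2 hc) hj

theorem isNormalInDegree_two_of_concaveOn {q : (ι → ℝ) → ℝ}
    (hq : ∀ x, ConcaveOn ℝ univ fun u => q (x - u) - q u) :
    IsNormalInDegree (convexHull ℝ {x | q x ≤ 1 ∧ IsLatticePt x}) 2 := by
  intro x hx hxl
  obtain ⟨w, hw, rfl⟩ := Set.mem_smul_set.1 hx
  rw [Nat.cast_ofNat] at hxl ⊢
  obtain ⟨u, hu, hle⟩ := (hq ((2 : ℝ) • w)).exists_le_of_mem_convexHull (subset_univ _) hw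
  rw [two_smul, add_sub_cancel_right, sub_self, ← two_smul ℝ] at hle
  have hrest : q ((2 : ℝ) • w - u) ≤ 1 ∧ IsLatticePt ((2 : ℝ) • w - u) :=
    ⟨by linarith [hu.1], hxl.sub hu.2⟩
  exact (isLatticeSum_one (subset_convexHull ℝ _ hrest) hrest.2).cons
    (subset_convexHull ℝ _ hu) hu.2

theorem mem_of_mem_convexHull_sublevel {q : (ι → ℝ) → ℝ} (hq : ConvexOn ℝ univ q)
    {x : ι → ℝ} (hx : x ∈ convexHull ℝ {x | q x ≤ 1 ∧ IsLatticePt x}) (hxl : IsLatticePt x) :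
    x ∈ {x | q x ≤ 1 ∧ IsLatticePt x} := by
  have hsub : {x | q x ≤ 1 ∧ IsLatticePt x} ⊆ {x ∈ univ | q x ≤ 1} :=
    fun y hy => ⟨mem_univ y, hy.1⟩
  exact ⟨(convexHull_min hsub (hq.convex_le 1) hx).2, hxl⟩

end LatticeSum

theorem IsNormalInDegree.succ_of_dim_le {d c : ℕ} {S : Set (Fin d → ℝ)}
    (h : IsNormalInDegree (convexHull ℝ S) c) (hS : ∀ x ∈ S, IsLatticePt x) (hc : 0 < c)
    (hdc : d ≤ c) : IsNormalInDegree (convexHull ℝ S) (c + 1) := by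
  intro x hx hxl
  obtain ⟨p, hp, rfl⟩ := Set.mem_smul_set.1 hx
  obtain ⟨κ, _, v, w, hv, -, hcard, hw0, hw1, rfl⟩ :=
    exists_affineIndependent_of_mem_convexHull hp
  obtain ⟨j, hj⟩ := exists_one_le_card_mul hw1
  refine h.isLatticeSum_succ hc hS hv hw0 hw1 (j := j) ?_ hxl rfl
  have : (Fintype.card κ : ℝ) ≤ c + 1 := by exact_mod_cast hcard.trans (by omega)
  nlinarith [hw0 j]

section Descent

variable {n : ℕ} {S : Set (Fin (n + 1) → ℝ)}

theorem exists_homogenizedMatrix_abs_det_lt (hS : ∀ x ∈ S, IsLatticePt x)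
    (hsat : ∀ x ∈ convexHull ℝ S, IsLatticePt x → x ∈ S) {v : Fin (n + 2) → Fin (n + 1) → ℝ}
    (hv : ∀ k, v k ∈ S) (hdet : (homogenizedMatrix v).det ≠ 0) {w : Fin (n + 2) → ℝ}
    (hw0 : ∀ k, 0 ≤ w k) (hw1 : ∑ k, w k = 1) (hsmall : ∀ k, ((n : ℝ) + 1) * w k < 1)
    {x : Fin (n + 1) → ℝ} (hx : IsLatticePt x) (hxw : x = ((n + 1 : ℕ) : ℝ) • ∑ k, w k • v k) :
    ∃ (v' : Fin (n + 2) → Fin (n + 1) → ℝ) (w' : Fin (n + 2) → ℝ), (∀ k, v' k ∈ S) ∧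
      (homogenizedMatrix v').det ≠ 0 ∧
      |(homogenizedMatrix v').det| + 1 ≤ |(homogenizedMatrix v).det| ∧
      (∀ k, 0 ≤ w' k) ∧ ∑ k, w' k = 1 ∧ x = ((n + 1 : ℕ) : ℝ) • ∑ k, w' k • v' k := by
  set β : Fin (n + 2) → ℝ := fun k => 1 - (n + 1) * w k with hβ
  have hβ0 : ∀ k, 0 < β k := fun k => by linarith [hsmall k]
  have hβ1 : ∑ k, β k = 1 := by
    simp only [hβ, Finset.sum_sub_distrib, ← Finset.mul_sum, hw1, Finset.sum_const,
      Finset.card_univ, Fintype.card_fin]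
    ring
  have hβlt : ∀ k, β k < 1 := fun k =>
    sub_lt_self 1 (mul_pos (by positivity) (pos_of_sum_eq_one_of_mul_lt_one hw1 hsmall k))
  set y := ∑ k, β k • v k
  have hy : y = ∑ k, v k - x := by
    simp only [y, hβ, hxw, sub_smul, one_smul, Finset.sum_sub_distrib, Finset.smul_sum, mul_smul,
      Nat.cast_succ]
  have hyS : y ∈ S := hsat y
    ((convex_convexHull ℝ S).sum_mem (fun k _ => (hβ0 k).le) hβ1
      fun k _ => subset_convexHull ℝ S (hv k))
    (hy ▸ (isLatticePt_sum fun k _ => hS _ (hv k)).sub hx)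
  obtain ⟨j, w', hw'0, hw'1, hw'⟩ := exists_weights_update_sum_smul hw0 hw1 hβ0 hβ1 v
  have hv' : ∀ k, Function.update v j y k ∈ S := fun k => by
    rcases eq_or_ne k j with rfl | hk
    · simpa using hyS
    · simpa [hk] using hv k
  have hdet' := det_homogenizedMatrix_update v hβ1 j
  obtain ⟨m, hm⟩ := exists_intCast_det_homogenizedMatrix fun k => hS _ (hv k)
  obtain ⟨m', hm'⟩ := exists_intCast_det_homogenizedMatrix fun k => hS _ (hv' k)
  refine ⟨_, w', hv', by rw [hdet']; exact mul_ne_zero (hβ0 j).ne' hdet, ?_, hw'0, hw'1,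
    by rw [hw', hxw]⟩
  have hlt : |(m' : ℝ)| < |(m : ℝ)| := by
    rw [← hm', ← hm, hdet', abs_mul, abs_of_pos (hβ0 j)]
    exact mul_lt_of_lt_one_left (abs_pos.2 hdet) (hβlt j)
  rw [hm, hm']
  exact_mod_cast (show |m'| + 1 ≤ |m| by exact_mod_cast hlt)

theorem IsNormalInDegree.isLatticeSum_of_det_ne_zero (h : IsNormalInDegree (convexHull ℝ S) n)
    (hS : ∀ x ∈ S, IsLatticePt x) (hsat : ∀ x ∈ convexHull ℝ S, IsLatticePt x → x ∈ S)
    (hn : 0 < n) (N : ℕ) {v : Fin (n + 2) → Fin (n + 1) → ℝ} (hv : ∀ k, v k ∈ S)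
    (hdet : (homogenizedMatrix v).det ≠ 0) (hN : |(homogenizedMatrix v).det| < N)
    {w : Fin (n + 2) → ℝ} (hw0 : ∀ k, 0 ≤ w k) (hw1 : ∑ k, w k = 1) {x : Fin (n + 1) → ℝ}
    (hx : IsLatticePt x) (hxw : x = ((n + 1 : ℕ) : ℝ) • ∑ k, w k • v k) :
    IsLatticeSum (convexHull ℝ S) (n + 1) x := by
  induction N generalizing v w with
  | zero => exact absurd hN (by simp)
  | succ N ih =>
    by_cases hgood : ∃ j, 1 ≤ ((n : ℝ) + 1) * w j
    · obtain ⟨j, hj⟩ := hgood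
      exact h.isLatticeSum_succ hn hS hv hw0 hw1 hj hx hxw
    push Not at hgood
    obtain ⟨v', w', hv', hdet', hlt, hw0', hw1', hxw'⟩ :=
      exists_homogenizedMatrix_abs_det_lt hS hsat hv hdet hw0 hw1 hgood hx hxw
    exact ih hv' hdet' (by push_cast at hN; linarith) hw0' hw1' hxw'

theorem IsNormalInDegree.succ_of_saturated (h : IsNormalInDegree (convexHull ℝ S) n)
    (hS : ∀ x ∈ S, IsLatticePt x) (hsat : ∀ x ∈ convexHull ℝ S, IsLatticePt x → x ∈ S)
    (hn : 0 < n) : IsNormalInDegree (convexHull ℝ S) (n + 1) := by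
  intro x hx hxl
  obtain ⟨p, hp, rfl⟩ := Set.mem_smul_set.1 hx
  obtain ⟨κ, _, v, w, hv, hind, hcard, hw0, hw1, rfl⟩ :=
    exists_affineIndependent_of_mem_convexHull hp
  rcases hcard.lt_or_eq with hlt | heq
  · obtain ⟨j, hj⟩ := exists_one_le_card_mul hw1
    refine h.isLatticeSum_succ hn hS hv hw0 hw1 (j := j) ?_ hxl rfl
    have : (Fintype.card κ : ℝ) ≤ n + 1 := by exact_mod_cast Nat.lt_succ_iff.1 hlt
    nlinarith [hw0 j]
  · let e := (Fintype.equivFinOfCardEq heq).symm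
    have hdet := det_homogenizedMatrix_ne_zero (hind.comp_embedding e.toEmbedding)
    obtain ⟨N, hN⟩ := exists_nat_gt |(homogenizedMatrix (v ∘ e)).det|
    rw [← e.sum_comp] at hw1 hxl ⊢
    exact h.isLatticeSum_of_det_ne_zero hS hsat hn N (fun k => hv _) hdet hN (fun k => hw0 _)
      hw1 hxl rfl

end Descent

section Ellipsoid

variable {V κ : Type*} [AddCommGroup V] [Module ℝ V] [Fintype κ] (l : κ → V →ₗ[ℝ] ℝ)
  (z : κ → ℝ)

theorem convexOn_sum_sq_sub : ConvexOn ℝ univ fun ξ => ∑ i, (l i ξ - z i) ^ 2 := by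
  refine ⟨convex_univ, fun u _ v _ a b ha hb hab => ?_⟩
  simp only [smul_eq_mul, Finset.mul_sum, ← Finset.sum_add_distrib]
  refine Finset.sum_le_sum fun i _ => ?_
  rw [map_add, map_smul, map_smul, smul_eq_mul, smul_eq_mul]
  obtain rfl : b = 1 - a := by linarith
  nlinarith [mul_nonneg ha hb, mul_nonneg (mul_nonneg ha hb) (sq_nonneg (l i u - l i v))]

theorem concaveOn_sum_sq_sub_sub (x : V) :
    ConcaveOn ℝ univ fun u => ∑ i, (l i (x - u) - z i) ^ 2 - ∑ i, (l i u - z i) ^ 2 := by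
  let g : V →ₗ[ℝ] ℝ := ∑ i, (2 * (l i x - 2 * z i)) • l i
  have h : (fun u => ∑ i, (l i (x - u) - z i) ^ 2 - ∑ i, (l i u - z i) ^ 2)
      = fun u => ∑ i, (l i x - 2 * z i) * l i x - g u := by
    funext u
    simp only [g, LinearMap.sum_apply, LinearMap.smul_apply, smul_eq_mul, map_sub,
      ← Finset.sum_sub_distrib]
    exact Finset.sum_congr rfl fun i _ => by ring
  rw [h]
  exact (concaveOn_const _ convex_univ).sub (g.convexOn convex_univ)

end Ellipsoid

theorem stmt_14_general (l : Fin 3 → ((Fin 3 → ℝ) →ₗ[ℝ] ℝ))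
    (z : Fin 3 → ℝ)
    (E : Set (Fin 3 → ℝ)) (hE : E = {ξ | ∑ i, (l i ξ - z i) ^ 2 ≤ 1})
    (P : Set (Fin 3 → ℝ)) (hP : P = convexHull ℝ {x ∈ E | IsLatticePt x}) :
    IsNormal P := by
  subst hE hP
  set q : (Fin 3 → ℝ) → ℝ := fun ξ => ∑ i, (l i ξ - z i) ^ 2
  set S := {x | q x ≤ 1 ∧ IsLatticePt x}
  change IsNormal (convexHull ℝ S)
  have hS : ∀ x ∈ S, IsLatticePt x := fun _ hx => hx.2
  have hsat : ∀ x ∈ convexHull ℝ S, IsLatticePt x → x ∈ S :=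
    fun _ => mem_of_mem_convexHull_sublevel (convexOn_sum_sq_sub l z)
  have h2 := isNormalInDegree_two_of_concaveOn (q := q) (concaveOn_sum_sq_sub_sub l z)
  have h3 := h2.succ_of_saturated hS hsat two_pos
  intro c hc
  rcases (by omega : c = 1 ∨ c = 2 ∨ 3 ≤ c) with rfl | rfl | hc3
  · exact isNormalInDegree_one
  · exact h2
  · induction c, hc3 using Nat.le_induction with
    | base => exact h3
    | succ c hc3 ih => exact IsNormalInDegree.succ_of_dim_le (ih (by omega)) hS (by omega) hc3

/-- The convex hull of all lattice points of a three-dimensional ellipsoid is a normal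
polytope. -/
theorem stmt_14 (l : Fin 3 → ((Fin 3 → ℝ) →ₗ[ℝ] ℝ))
    (hl : LinearIndependent ℝ l) (z : Fin 3 → ℝ)
    (E : Set (Fin 3 → ℝ)) (hE : E = {ξ | ∑ i, (l i ξ - z i) ^ 2 ≤ 1})
    (P : Set (Fin 3 → ℝ)) (hP : P = convexHull ℝ {x ∈ E | IsLatticePt x}) :
    IsNormal P :=
  stmt_14_general l z E hE P hP
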